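/- For every uncountable cardinal κ, every reflective set S ⊆ [κ]^ω is projective stationary. -/

import Mathlib

open Set Cardinal

noncomputable section

/-- The first uncountable ordinal `ω₁`. -/
def omega1 : Ordinal.{0} := (Cardinal.aleph 1).ord

/-- `x ∩ ω₁` is a countable ordinal. -/
def GoodSet (x : Set Ordinal.{0}) : Prop :=
  ∃ δ < omega1, x ∩ Set.Iio omega1 = Set.Iio δ

/-- `δ_x`: the countable ordinal `x ∩ ω₁`. -/
def delta (x : Set Ordinal.{0}) : Ordinal.{0} :=
  sInf {δ : Ordinal.{0} | x ∩ Set.Iio omega1 = Set.Iio δ}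

/-- The space `[X]^ω` of countable subsets of `X` (restricted, as in the paper,
to those `x` whose intersection with `ω₁` is a countable ordinal). -/
def countPow (X : Set Ordinal.{0}) : Set (Set Ordinal.{0}) :=
  {x | x ⊆ X ∧ x.Countable ∧ GoodSet x}

/-- `C` is club in `[X]^ω`: it is cofinal and closed under unions of countable
`⊆`-increasing chains. -/
def IsClubIn (X : Set Ordinal.{0}) (C : Set (Set Ordinal.{0})) : Prop :=
  C ⊆ countPow X ∧ (∀ x ∈ countPow X, ∃ y ∈ C, x ⊆ y) ∧
    ∀ D : Set (Set Ordinal.{0}), D ⊆ C → D.Countable → D.Nonempty →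
      IsChain (· ⊆ ·) D → ⋃₀ D ∈ C

/-- `S` is stationary in `[X]^ω`: it meets every club. -/
def IsStatIn (X : Set Ordinal.{0}) (S : Set (Set Ordinal.{0})) : Prop :=
  ∀ C, IsClubIn X C → (S ∩ C).Nonempty

/-- Club subsets of `ω₁` (closed unbounded in the ordinal `ω₁`). -/
def IsClubOmega1 (C : Set Ordinal.{0}) : Prop :=
  C ⊆ Set.Iio omega1 ∧ (∀ α < omega1, ∃ β ∈ C, α < β) ∧
    ∀ α < omega1, α ≠ 0 → (∀ β < α, ∃ γ ∈ C, β < γ ∧ γ < α) → α ∈ C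

/-- Stationary subsets of `ω₁`. -/
def IsStatOmega1 (A : Set Ordinal.{0}) : Prop :=
  ∀ C, IsClubOmega1 C → (A ∩ C).Nonempty

/-- A (continuous, `δ`-increasing) `ω₁`-chain: `⟨f α : α < ω₁⟩`. -/
def IsOmega1Chain (f : Ordinal.{0} → Set Ordinal.{0}) : Prop :=
  (∀ α β, α < β → β < omega1 → f α ⊆ f β) ∧
  (∀ β < omega1, Order.IsSuccLimit β → f β = ⋃ α ∈ Set.Iio β, f α) ∧
  (∀ α β, α < β → β < omega1 → delta (f α) < delta (f β))

/-- The space `[Y]^{ω₁}` of subsets of `Y` of cardinality `ℵ₁`. -/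
def aleph1Pow (Y : Set Ordinal.{0}) : Set (Set Ordinal.{0}) :=
  {X | X ⊆ Y ∧ Cardinal.mk X = Cardinal.aleph 1}

/-- `C` is club in `[Y]^{ω₁}`: cofinal and closed under unions of
`⊆`-increasing chains of length `ω₁`. -/
def IsClubAleph1 (Y : Set Ordinal.{0}) (C : Set (Set Ordinal.{0})) : Prop :=
  C ⊆ aleph1Pow Y ∧ (∀ X ∈ aleph1Pow Y, ∃ Z ∈ C, X ⊆ Z) ∧
    ∀ f : Ordinal.{0} → Set Ordinal.{0}, (∀ α β, α < β → β < omega1 → f α ⊆ f β) →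
      (∀ α < omega1, f α ∈ C) → (⋃ α ∈ Set.Iio omega1, f α) ∈ C

/-- `S` is a local club in `[Y]^ω`: the set of `X ∈ [Y]^{ω₁}` such that
`S ∩ [X]^ω` contains a club in `[X]^ω` contains a club in `[Y]^{ω₁}`. -/
def IsLocalClub (Y : Set Ordinal.{0}) (S : Set (Set Ordinal.{0})) : Prop :=
  ∃ C, IsClubAleph1 Y C ∧ ∀ X ∈ C, ∃ D, IsClubIn X D ∧ D ⊆ S

/-- `S` is projective stationary in `[X]^ω`. -/
def ProjStationary (X : Set Ordinal.{0}) (S : Set (Set Ordinal.{0})) : Prop :=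
  ∀ A ⊆ Set.Iio omega1, IsStatOmega1 A → IsStatIn X {x ∈ S | delta x ∈ A}

/-- `S ⊆ [κ]^ω` is spanning. -/
def IsSpanning (κ : Cardinal) (S : Set (Set Ordinal.{0})) : Prop :=
  ∀ lam : Cardinal, κ ≤ lam → ∀ C, IsClubIn (Set.Iio lam.ord) C →
    ∃ D, IsClubIn (Set.Iio lam.ord) D ∧
      ∀ x ∈ D, ∃ y ∈ C, x ⊆ y ∧ delta x = delta y ∧ (y ∩ Set.Iio κ.ord) ∈ S

/-- `S ⊆ [X]^ω` is reflective: for every club `C`, `S ∩ C` contains an `ω₁`-chain. -/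
def IsReflective (X : Set Ordinal.{0}) (S : Set (Set Ordinal.{0})) : Prop :=
  ∀ C, IsClubIn X C → ∃ f, IsOmega1Chain f ∧ ∀ α < omega1, f α ∈ S ∩ C

/-- `S ⊆ [X]^ω` is full. -/
def IsFull (X : Set Ordinal.{0}) (S : Set (Set Ordinal.{0})) : Prop :=
  ∀ A ⊆ Set.Iio omega1, IsStatOmega1 A →
    ∃ B, B ⊆ A ∧ IsStatOmega1 B ∧ ∃ C, IsClubIn X C ∧ {x ∈ C | delta x ∈ B} ⊆ S

/-- The order type of a set of ordinals. -/
def otp (s : Set Ordinal.{0}) : Ordinal.{0} :=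
  sInf {o : Ordinal.{0} | Nonempty (↥s ≃o ↥(Set.Iio o))}

/-- The nonstationary ideal on `ω₁` is saturated. -/
def NSSaturated : Prop :=
  ∀ W : Set (Set Ordinal.{0}), (∀ A ∈ W, A ⊆ Set.Iio omega1 ∧ IsStatOmega1 A) →
    (∀ A ∈ W, ∀ B ∈ W, A ≠ B → ¬ IsStatOmega1 (A ∩ B)) →
    Cardinal.mk W ≤ Cardinal.aleph 1

private lemma omega1_isLimit : Order.IsSuccLimit omega1 :=
  Cardinal.isSuccLimit_ord (Cardinal.aleph0_le_aleph 1)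

private lemma delta_eq {x : Set Ordinal.{0}} {δ : Ordinal.{0}}
    (hxδ : x ∩ Set.Iio omega1 = Set.Iio δ) : delta x = δ := by
  have hset : {δ' : Ordinal.{0} | x ∩ Set.Iio omega1 = Set.Iio δ'} = {δ} := by
    ext δ'
    simp only [Set.mem_setOf_eq, Set.mem_singleton_iff, hxδ]
    exact ⟨fun h => (Set.Iio_injective h).symm, fun h => by rw [h]⟩
  rw [delta, hset, csInf_singleton]

private lemma good_delta {x : Set Ordinal.{0}} (hx : GoodSet x) :
    x ∩ Set.Iio omega1 = Set.Iio (delta x) ∧ delta x < omega1 := by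
  obtain ⟨δ, hδ, hxδ⟩ := hx
  rw [delta_eq hxδ]
  exact ⟨hxδ, hδ⟩

/-- every reflective set `S ⊆ [κ]^ω` is projective stationary. -/
theorem reflective_implies_projectiveStationary (κ : Cardinal) (hκ : Cardinal.aleph0 < κ)
    (S : Set (Set Ordinal.{0})) (hS : S ⊆ countPow (Set.Iio κ.ord))
    (h : IsReflective (Set.Iio κ.ord) S) :
    ProjStationary (Set.Iio κ.ord) S := by
  intro A hA hAstat C hC
  obtain ⟨f, ⟨hmono, hcont, hdelta⟩, hf⟩ := h C hC
  -- properties of g := delta ∘ f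
  have hgood : ∀ α < omega1, GoodSet (f α) := fun α hα => (hC.1 (hf α hα).2).2.2
  have hIio : ∀ α < omega1, f α ∩ Set.Iio omega1 = Set.Iio (delta (f α)) :=
    fun α hα => (good_delta (hgood α hα)).1
  have hglt : ∀ α < omega1, delta (f α) < omega1 :=
    fun α hα => (good_delta (hgood α hα)).2
  have hmono' : ∀ ξ ξ', ξ ≤ ξ' → ξ' < omega1 → delta (f ξ) ≤ delta (f ξ') := by
    intro ξ ξ' hle hlt
    rcases hle.lt_or_eq with h | h
    · exact (hdelta ξ ξ' h hlt).le
    · rw [h]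
  have hle : ∀ α < omega1, α ≤ delta (f α) := by
    intro α
    induction α using Ordinal.induction with
    | _ α ih =>
      intro hα
      by_contra hnle
      have h1 : delta (f α) < α := not_le.mp hnle
      have h2 : delta (f α) ≤ delta (f (delta (f α))) := ih _ h1 (h1.trans hα)
      exact absurd (h2.trans_lt (hdelta _ _ h1 hα)) (lt_irrefl _)
  -- the set of deltas along the chain is a club in ω₁
  set D : Set Ordinal.{0} := {δ | ∃ ξ, ξ < omega1 ∧ delta (f ξ) = δ} with hD
  have hDclub : IsClubOmega1 D := by
    refine ⟨?_, ?_, ?_⟩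
    · rintro δ ⟨ξ, hξ, rfl⟩
      exact hglt ξ hξ
    · intro α hα
      have hsucc : α + 1 < omega1 := by
          have := omega1_isLimit.succ_lt hα; rwa [Order.succ_eq_add_one] at this
      exact ⟨delta (f (α + 1)), ⟨α + 1, hsucc, rfl⟩,
        (hle α hα).trans_lt (hdelta α (α + 1) (lt_add_one α) hsucc)⟩
    · intro α hα hα0 hcl
      set T : Set Ordinal.{0} := {ξ | ξ < omega1 ∧ delta (f ξ) < α} with hT
      have hTbdd : BddAbove T := ⟨α, fun ξ hξ => ((hle ξ hξ.1).trans_lt hξ.2).le⟩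
      have hTne : T.Nonempty := by
        obtain ⟨γ, ⟨ξ, hξ, rfl⟩, _, hγα⟩ := hcl 0 (pos_iff_ne_zero.mpr hα0)
        exact ⟨ξ, hξ, hγα⟩
      have hnomax : ∀ ξ ∈ T, ∃ ξ' ∈ T, ξ < ξ' := by
        rintro ξ ⟨hξω, hξα⟩
        obtain ⟨γ, ⟨ξ', hξ', rfl⟩, hgt, hlt⟩ := hcl (delta (f ξ)) hξα
        refine ⟨ξ', ⟨hξ', hlt⟩, ?_⟩
        by_contra hnlt
        exact absurd (hmono' ξ' ξ (not_lt.mp hnlt) hξω) (not_le.mpr hgt)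
      set σ : Ordinal.{0} := sSup T with hσ
      have hσω : σ < omega1 := by
        have : σ ≤ α := csSup_le hTne fun ξ hξ => ((hle ξ hξ.1).trans_lt hξ.2).le
        exact this.trans_lt hα
      have hσnotT : σ ∉ T := by
        intro hmem
        obtain ⟨ξ', hξ'T, hlt⟩ := hnomax σ hmem
        exact absurd (le_csSup hTbdd hξ'T) (not_le.mpr hlt)
      have hTsub : ∀ ξ < σ, delta (f ξ) < α := by
        intro ξ hξ
        obtain ⟨ξ'', hξ''T, hlt⟩ := (lt_csSup_iff hTbdd hTne).mp hξ
        exact (hdelta ξ ξ'' hlt hξ''T.1).trans hξ''T.2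
      have hσlim : Order.IsSuccLimit σ := by
        rw [Ordinal.isSuccLimit_iff, Order.isSuccPrelimit_iff_succ_lt]
        constructor
        · intro h0
          obtain ⟨ξ, hξT⟩ := hTne
          obtain ⟨ξ', hξ'T, hlt⟩ := hnomax ξ hξT
          have : ξ' ≤ σ := le_csSup hTbdd hξ'T
          rw [h0] at this
          exact absurd ((zero_le (a := ξ)).trans_lt hlt) (not_lt.mpr this)
        · intro β hβ
          obtain ⟨ξ, hξT, hlt⟩ := (lt_csSup_iff hTbdd hTne).mp hβ
          obtain ⟨ξ', hξ'T, hlt'⟩ := hnomax ξ hξT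
          have h1 : Order.succ β ≤ ξ := Order.succ_le_of_lt hlt
          exact h1.trans_lt (hlt'.trans_le (le_csSup hTbdd hξ'T))
      -- delta (f σ) = α
      have hfσ : f σ = ⋃ ξ ∈ Set.Iio σ, f ξ := hcont σ hσω hσlim
      have hge : α ≤ delta (f σ) := by
        by_contra hnle
        exact hσnotT ⟨hσω, not_le.mp hnle⟩
      have hlesig : delta (f σ) ≤ α := by
        apply le_of_forall_lt
        intro c hc
        have hcmem : c ∈ f σ ∩ Set.Iio omega1 := by
          rw [hIio σ hσω]; exact hc
        obtain ⟨hcf, hcω⟩ := hcmem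
        rw [hfσ] at hcf
        simp only [Set.mem_iUnion, Set.mem_Iio, exists_prop] at hcf
        obtain ⟨ξ, hξσ, hcξ⟩ := hcf
        have hξω : ξ < omega1 := hξσ.trans hσω
        have : c ∈ Set.Iio (delta (f ξ)) := by
          rw [← hIio ξ hξω]; exact ⟨hcξ, hcω⟩
        exact this.trans (hTsub ξ hξσ)
      exact ⟨σ, hσω, le_antisymm hlesig hge⟩
  obtain ⟨δ, hδA, ξ, hξω, hξδ⟩ := hAstat D hDclub
  exact ⟨f ξ, ⟨(hf ξ hξω).1, hξδ ▸ hδA⟩, (hf ξ hξω).2⟩
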